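/- Let A be a finite symbol set with weight function w : A → ℕ, w(a) ≥ 1 for all a, frequencies f : A → ℕ with f(a) ≥ 1 for all a, an integer z*, and an integer T ≥ 1. For each symbol a let N_a = {k ∈ ℕ : k ≥ f(a) and w(a) · ⌈T / k⌉ < z*}. If some N_a is empty, or if every N_a is nonempty and the sum over a ∈ A of min N_a is strictly greater than T, then there exists no feasible circular sequence S of length T with obj(S) < z*. -/

import Mathlib

/-!
Fix a symbol `a` occurring `k ≥ 1` times in a sequence `S` of length `T`. Every position is reached
from some occurrence `t` of `a` by stepping forward fewer than `gap_S(t) ≤ D_a(S)` places (take the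
nearest occurrence behind it), so `T ≤ k · D_a(S)`, i.e. `⌈T / k⌉ ≤ D_a(S)`. Hence if `S` is feasible
with `obj(S) < z*`, then `count_a(S) ∈ N_a` for every `a`: no `N_a` is empty, and
`∑ min N_a ≤ ∑ count_a(S) = T`.
-/

variable {A : Type*}

/-- The circular gap of sequence `S` at position `t` for symbol `a`:
the least positive `d` with `S ((t + d) % T) = a`. -/
noncomputable def gap {T : ℕ} (S : Fin T → A) (a : A) (t : Fin T) : ℕ :=
  sInf {d : ℕ | 0 < d ∧ S ⟨(t.val + d) % T, Nat.mod_lt _ t.pos⟩ = a}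

/-- Number of positions where symbol `a` occurs in `S`. -/
def count {T : ℕ} [DecidableEq A] (S : Fin T → A) (a : A) : ℕ :=
  (Finset.univ.filter fun t => S t = a).card

/-- `D_a(S)`: the maximum gap of symbol `a` over its positions in `S`. -/
noncomputable def Dmax {T : ℕ} [DecidableEq A] (S : Fin T → A) (a : A) : ℕ :=
  (Finset.univ.filter fun t => S t = a).sup (gap S a)

/-- Objective value: max over occurring symbols of weight times maximum gap. -/
noncomputable def obj {T : ℕ} [Fintype A] [DecidableEq A] (w : A → ℕ) (S : Fin T → A) : ℕ :=
  (Finset.univ.filter fun a => 1 ≤ count S a).sup fun a => w a * Dmax S a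

/-- The paper's `N_a`; `(T + k - 1) / k` is `⌈T / k⌉`. -/
def admissibleCounts (w f : A → ℕ) (zstar : ℤ) (T : ℕ) (a : A) : Set ℕ :=
  {k | f a ≤ k ∧ ((w a * ((T + k - 1) / k) : ℕ) : ℤ) < zstar}

section

variable {T : ℕ}

def circShift (t : Fin T) (d : ℕ) : Fin T :=
  ⟨(t.val + d) % T, Nat.mod_lt _ t.pos⟩

lemma circShift_circShift (t : Fin T) (d e : ℕ) :
    circShift (circShift t d) e = circShift t (d + e) :=
  Fin.ext <| by simp only [circShift, Nat.mod_add_mod, Nat.add_assoc]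

lemma circShift_length (t : Fin T) : circShift t T = t :=
  Fin.ext <| by simp [circShift, Nat.mod_eq_of_lt t.isLt]

lemma gap_pos_and_apply_circShift_gap {S : Fin T → A} {a : A} {t : Fin T} (ht : S t = a) :
    0 < gap S a t ∧ S (circShift t (gap S a t)) = a :=
  Nat.sInf_mem (s := {d | 0 < d ∧ S (circShift t d) = a}) ⟨T, t.pos, by rwa [circShift_length]⟩

lemma exists_circShift_eq_of_lt_gap {S : Fin T → A} {a : A} {t₀ : Fin T} (ht₀ : S t₀ = a)
    (u : Fin T) : ∃ t, S t = a ∧ ∃ e < gap S a t, circShift t e = u := by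
  classical
  have hreach : ∃ e, ∃ t, S t = a ∧ circShift t e = u :=
    ⟨u.val + T - t₀.val, t₀, ht₀, Fin.ext <| by
      simp only [circShift]
      rw [show t₀.val + (u.val + T - t₀.val) = u.val + T by omega, Nat.add_mod_right,
        Nat.mod_eq_of_lt u.isLt]⟩
  obtain ⟨t, ht, htu⟩ := Nat.find_spec hreach
  refine ⟨t, ht, Nat.find hreach, ?_, htu⟩
  by_contra! hle
  -- the next occurrence after `t` would reach `u` in fewer steps
  obtain ⟨hpos, hnext⟩ := gap_pos_and_apply_circShift_gap ht
  refine Nat.find_min hreach (m := Nat.find hreach - gap S a t) (by omega) ⟨_, hnext, ?_⟩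
  rwa [circShift_circShift, Nat.add_sub_cancel' hle]

variable [DecidableEq A]

lemma gap_le_Dmax {S : Fin T → A} {a : A} {t : Fin T} (ht : S t = a) : gap S a t ≤ Dmax S a :=
  Finset.le_sup (Finset.mem_filter.mpr ⟨Finset.mem_univ t, ht⟩)

lemma length_le_count_mul_Dmax {S : Fin T → A} {a : A} (ha : 1 ≤ count S a) :
    T ≤ count S a * Dmax S a := by
  obtain ⟨t₀, ht₀⟩ := Finset.card_pos.mp ha
  have hcover : (Finset.univ : Finset (Fin T)) ⊆
      ((Finset.univ.filter fun t => S t = a) ×ˢ Finset.range (Dmax S a)).image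
        fun p => circShift p.1 p.2 := by
    intro u _
    obtain ⟨t, ht, e, he, rfl⟩ :=
      exists_circShift_eq_of_lt_gap (Finset.mem_filter.mp ht₀).2 u
    exact Finset.mem_image.mpr ⟨(t, e), Finset.mem_product.mpr
      ⟨Finset.mem_filter.mpr ⟨Finset.mem_univ t, ht⟩,
        Finset.mem_range.mpr (he.trans_le (gap_le_Dmax ht))⟩, rfl⟩
  simpa [count, Finset.card_product] using
    (Finset.card_le_card hcover).trans Finset.card_image_le

lemma ceilDiv_count_le_Dmax {S : Fin T → A} {a : A} (ha : 1 ≤ count S a) :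
    (T + count S a - 1) / count S a ≤ Dmax S a := by
  rw [Nat.div_le_iff_le_mul_add_pred ha]
  have := length_le_count_mul_Dmax ha
  omega

lemma mul_Dmax_le_obj [Fintype A] (w : A → ℕ) {S : Fin T → A} {a : A} (ha : 1 ≤ count S a) :
    w a * Dmax S a ≤ obj w S :=
  Finset.le_sup (f := fun a => w a * Dmax S a) (Finset.mem_filter.mpr ⟨Finset.mem_univ a, ha⟩)

lemma sum_count [Fintype A] (S : Fin T → A) : ∑ a, count S a = T := by
  simpa [count] using
    (Finset.card_eq_sum_card_fiberwise (f := S) (s := Finset.univ) (t := Finset.univ)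
      fun _ _ => Finset.mem_univ _).symm

lemma count_mem_admissibleCounts [Fintype A] {w f : A → ℕ} (hf : ∀ a, 1 ≤ f a) {zstar : ℤ}
    {S : Fin T → A} (hfeas : ∀ a, f a ≤ count S a) (hobj : (obj w S : ℤ) < zstar) (a : A) :
    count S a ∈ admissibleCounts w f zstar T a := by
  have ha : 1 ≤ count S a := (hf a).trans (hfeas a)
  refine ⟨hfeas a, lt_of_le_of_lt ?_ hobj⟩
  exact_mod_cast (Nat.mul_le_mul_left _ (ceilDiv_count_le_Dmax ha)).trans (mul_Dmax_le_obj w ha)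

end

theorem no_improving_sequence_general [Fintype A] [DecidableEq A]
    (w f : A → ℕ) (hf : ∀ a, 1 ≤ f a) (zstar : ℤ)
    (T : ℕ)
    (h : (∃ a : A,
            {k : ℕ | f a ≤ k ∧ ((w a * ((T + k - 1) / k) : ℕ) : ℤ) < zstar} = ∅) ∨
         ((∀ a : A,
            {k : ℕ | f a ≤ k ∧ ((w a * ((T + k - 1) / k) : ℕ) : ℤ) < zstar}.Nonempty) ∧
          T < ∑ a : A,
            sInf {k : ℕ | f a ≤ k ∧ ((w a * ((T + k - 1) / k) : ℕ) : ℤ) < zstar})) :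
    ¬ ∃ S : Fin T → A, (∀ a, f a ≤ count S a) ∧ (obj w S : ℤ) < zstar := by
  rintro ⟨S, hfeas, hobj⟩
  have hmem := count_mem_admissibleCounts hf hfeas hobj
  rcases h with ⟨a, hempty⟩ | ⟨-, hsum⟩
  · exact (Set.eq_empty_iff_forall_notMem.mp hempty) _ (hmem a)
  · refine hsum.not_ge ?_
    calc ∑ a, sInf (admissibleCounts w f zstar T a)
        ≤ ∑ a, count S a := Finset.sum_le_sum fun a _ => Nat.sInf_le (hmem a)
      _ = T := sum_count S

/-- if some `N_a` is empty, or all are nonempty and their minima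
sum to more than `T`, then no feasible sequence of length `T` improves on `z*`. -/
theorem no_improving_sequence [Fintype A] [DecidableEq A]
    (w f : A → ℕ) (hw : ∀ a, 1 ≤ w a) (hf : ∀ a, 1 ≤ f a) (zstar : ℤ)
    (T : ℕ) (hT : 1 ≤ T)
    (h : (∃ a : A,
            {k : ℕ | f a ≤ k ∧ ((w a * ((T + k - 1) / k) : ℕ) : ℤ) < zstar} = ∅) ∨
         ((∀ a : A,
            {k : ℕ | f a ≤ k ∧ ((w a * ((T + k - 1) / k) : ℕ) : ℤ) < zstar}.Nonempty) ∧
          T < ∑ a : A,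
            sInf {k : ℕ | f a ≤ k ∧ ((w a * ((T + k - 1) / k) : ℕ) : ℤ) < zstar})) :
    ¬ ∃ S : Fin T → A, (∀ a, f a ≤ count S a) ∧ (obj w S : ℤ) < zstar :=
  no_improving_sequence_general w f hf zstar T h
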